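/- Under mechanism g^{2,k}, for any agent i ∈ E_k and any unilateral deviation of i's message: (a) i's own selection probability is unchanged, (b) the sum of selection probabilities of i's friends is unchanged, and (c) the sum of selection probabilities of i's enemies is unchanged. -/
import Mathlib


open Finset

/-- The set of agents receiving positive votes from all their enemies in `X`. -/
def posE {α : Type*} [Fintype α] [DecidableEq α] (E : α → Finset α)
    (m : α → Finset α) (X : Finset α) : Finset α :=
  univ.filter (fun l => ∀ x ∈ X ∩ E l, l ∈ m x)

/-- `g^{2,k}_i(m)` for `i ≠ k`. -/
noncomputable def g2 {α : Type*} [Fintype α] [DecidableEq α] (E : α → Finset α)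
    (k : α) (m : α → Finset α) (i : α) : ℝ :=
  if i ∈ posE E m (E k) then 1 / (((posE E m (E i ∩ E k)).erase k).card : ℝ) else 0

/-- The full mechanism `g^{2,k}`, with agent `k` receiving the residual probability. -/
noncomputable def g2full {α : Type*} [Fintype α] [DecidableEq α] (E : α → Finset α)
    (k : α) (m : α → Finset α) (i : α) : ℝ :=
  if i = k then 1 - ∑ j ∈ univ.erase k, g2 E k m j else g2 E k m i

lemma posE_update_of_notMem {α : Type*} [Fintype α] [DecidableEq α] (E : α → Finset α)
    (m : α → Finset α) (i : α) (m'i : Finset α) (X : Finset α) (hiX : i ∉ X) :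
    posE E (Function.update m i m'i) X = posE E m X := by
  ext l
  simp only [posE, mem_filter, mem_univ, true_and]
  refine forall₂_congr fun x hx => ?_
  have hxi : x ≠ i := fun h => hiX (h ▸ (mem_inter.mp hx).1)
  rw [Function.update_of_ne hxi]

lemma mem_posE_update {α : Type*} [Fintype α] [DecidableEq α] (E : α → Finset α)
    (m : α → Finset α) (i j : α) (m'i : Finset α) (X : Finset α) (hij : i ∉ E j) :
    (j ∈ posE E (Function.update m i m'i) X ↔ j ∈ posE E m X) := by
  simp only [posE, mem_filter, mem_univ, true_and]
  refine forall₂_congr fun x hx => ?_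
  have hxi : x ≠ i := fun h => hij (h ▸ (mem_inter.mp hx).2)
  rw [Function.update_of_ne hxi]

lemma g2_update {α : Type*} [Fintype α] [DecidableEq α] (E : α → Finset α)
    (k : α) (m : α → Finset α) (i j : α) (m'i : Finset α) (hij : i ∉ E j) :
    g2 E k (Function.update m i m'i) j = g2 E k m j := by
  unfold g2
  rw [posE_update_of_notMem E m i m'i (E j ∩ E k) (fun h => hij (mem_inter.mp h).1)]
  simp only [mem_posE_update E m i j m'i (E k) hij]

/-- DSIC of `g^{2,k}`: a unilateral deviation by an agent `i ∈ E_k` changes neither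
her own selection probability, nor the total probability of her friends, nor the
total probability of her enemies. -/
theorem stmt6 {α : Type*} [Fintype α] [DecidableEq α] (F E I : α → Finset α)
    (hpart : ∀ i, F i ∪ E i ∪ I i = univ.erase i)
    (hFE : ∀ i, Disjoint (F i) (E i)) (hFI : ∀ i, Disjoint (F i) (I i))
    (hEI : ∀ i, Disjoint (E i) (I i))
    (hFsym : ∀ i j, j ∈ F i ↔ i ∈ F j) (hEsym : ∀ i j, j ∈ E i ↔ i ∈ E j)
    (k : α) (m : α → Finset α) (i : α) (hi : i ∈ E k) (m'i : Finset α) :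
    g2full E k (Function.update m i m'i) i = g2full E k m i ∧
    ∑ j ∈ F i, g2full E k (Function.update m i m'i) j = ∑ j ∈ F i, g2full E k m j ∧
    ∑ j ∈ E i, g2full E k (Function.update m i m'i) j = ∑ j ∈ E i, g2full E k m j := by
  have hEsub : ∀ j, E j ⊆ univ.erase j := fun j => by
    rw [← hpart j]; exact subset_union_right.trans subset_union_left
  have hnotself : ∀ j, j ∉ E j := fun j h => (mem_erase.mp (hEsub j h)).1 rfl
  have hik : i ≠ k := by
    have := hEsub k hi; exact (mem_erase.mp this).1
  have hki : k ∈ E i := (hEsym i k).mpr hi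
  refine ⟨?_, ?_, ?_⟩
  · simp only [g2full, if_neg hik]
    exact g2_update E k m i i m'i (hnotself i)
  · refine sum_congr rfl fun j hj => ?_
    have hjE : j ∉ E i := fun h => disjoint_left.mp (hFE i) hj h
    have hjk : j ≠ k := fun h => hjE (h ▸ hki)
    have hij : i ∉ E j := fun h => hjE ((hEsym i j).mpr h)
    simp only [g2full, if_neg hjk]
    exact g2_update E k m i j m'i hij
  · have hsub : (E i).erase k ⊆ univ.erase k := erase_subset_erase _ (subset_univ _)
    have expand : ∀ (mm : α → Finset α), ∑ j ∈ E i, g2full E k mm j =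
        1 - ∑ j ∈ univ.erase k \ (E i).erase k, g2 E k mm j := by
      intro mm
      rw [← Finset.add_sum_erase (E i) _ hki]
      have h1 : ∀ j ∈ (E i).erase k, g2full E k mm j = g2 E k mm j := fun j hj => by
        simp only [g2full, if_neg (ne_of_mem_erase hj)]
      rw [sum_congr rfl h1]
      simp only [g2full, eq_self_iff_true, if_true]
      rw [← Finset.sum_sdiff hsub]
      ring
    rw [expand, expand]
    congr 1
    refine sum_congr rfl fun j hj => ?_
    obtain ⟨hj1, hj2⟩ := mem_sdiff.mp hj
    have hjk : j ≠ k := (mem_erase.mp hj1).1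
    have hjE : j ∉ E i := fun h => hj2 (mem_erase.mpr ⟨hjk, h⟩)
    have hij : i ∉ E j := fun h => hjE ((hEsym i j).mpr h)
    exact g2_update E k m i j m'i hij
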